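/- arXiv:math/0408300 — 2 statements merged into one kernel-verified Lean document; each statement's English description precedes it below -/
import Mathlib

section
/- Let A be a complex Banach algebra (not necessarily unital) and set Q(A) := L(A) \ N'₃(A). If Q(A) ≠ ∅, then ‖a − b‖ ≥ 1 for every a ∈ N'₃(A) and b ∈ Q(A), so the distance d(N'₃(A), Q(A)) := inf{‖a − b‖ : a ∈ N'₃(A), b ∈ Q(A)} is at least 1. Moreover, the subspace L(A) is disconnected if and only if Q(A) ≠ ∅. -/
/-!
Write `c = b - a` for `a ∈ N'₃(A)` and `b ∈ L(A) \ N'₃(A)`. Since `b ∉ N'₃(A)` and `b` is an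
endomorphic left element, `u = b x` satisfies `u p q ≠ 0` for some `x, p, q`, while
`u (c z) w = u z w` for all `z, w`. Iterating this identity gives
`‖u p q‖ ≤ ‖u‖ ‖c‖ⁿ ‖p‖ ‖q‖` for every `n`, which forces `‖c‖ ≥ 1`.

Hence `L(A) = N'₃(A) ∪ Q(A)` splits into two pieces at distance `≥ 1`, so `L(A)` is
disconnected as soon as `Q(A)` is nonempty. Conversely, if `Q(A) = ∅` then
`L(A) = N'₃(A)`, a complex subspace, hence connected.
-/

open Metric

/-- `L(A)` in the paper. -/
def endomorphicLeft (A : Type*) [Mul A] : Set A :=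
  {a | ∀ x y : A, a * x * a * y = a * x * y}

/-- `N'₃(A)` in the paper. -/
def leftAnnihilatorSq (A : Type*) [Mul A] [Zero A] : Set A :=
  {a | ∀ x y : A, a * x * y = 0}

theorem mul_mul_eq_zero_of_norm_lt_one {A : Type*} [NonUnitalNormedRing A] {u c : A}
    (hu : ∀ z w : A, u * (c * z) * w = u * z * w) (hc : ‖c‖ < 1) (x y : A) :
    u * x * y = 0 := by
  have hbound : ∀ n : ℕ, ∀ x y : A, ‖u * x * y‖ ≤ ‖u‖ * ‖x‖ * ‖y‖ * ‖c‖ ^ n := by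
    intro n
    induction n with
    | zero => simpa using fun x y => norm_mul₃_le (a := u) (b := x) (c := y)
    | succ n ih =>
      intro x y
      calc ‖u * x * y‖ = ‖u * (c * x) * y‖ := by rw [hu]
        _ ≤ ‖u‖ * ‖c * x‖ * ‖y‖ * ‖c‖ ^ n := ih _ _
        _ ≤ ‖u‖ * (‖c‖ * ‖x‖) * ‖y‖ * ‖c‖ ^ n := by gcongr; exact norm_mul_le _ _
        _ = ‖u‖ * ‖x‖ * ‖y‖ * ‖c‖ ^ (n + 1) := by ring
  have hlim : Filter.Tendsto (fun n : ℕ => ‖u‖ * ‖x‖ * ‖y‖ * ‖c‖ ^ n) Filter.atTop (nhds 0) := by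
    simpa using (tendsto_pow_atTop_nhds_zero_of_lt_one (norm_nonneg c) hc).const_mul
      (‖u‖ * ‖x‖ * ‖y‖)
  exact norm_le_zero_iff.mp <| ge_of_tendsto hlim <| Filter.Eventually.of_forall (hbound · x y)

theorem leftAnnihilatorSq_subset_endomorphicLeft (A : Type*) [SemigroupWithZero A] :
    leftAnnihilatorSq A ⊆ endomorphicLeft A := fun a ha x y => by
  rw [ha x y, mul_assoc a x a, ha]

theorem one_le_norm_sub_of_mem_leftAnnihilatorSq {A : Type*} [NonUnitalNormedRing A] {a b : A}
    (ha : a ∈ leftAnnihilatorSq A) (hb : b ∈ endomorphicLeft A \ leftAnnihilatorSq A) :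
    1 ≤ ‖a - b‖ := by
  obtain ⟨hbL, hbN⟩ := hb
  obtain ⟨x, y, hxy⟩ : ∃ x y : A, b * x * y ≠ 0 := by
    simpa [leftAnnihilatorSq] using hbN
  have hu : ∀ z w : A, b * x * ((b - a) * z) * w = b * x * z * w := by
    intro z w
    have hbz : b * x * (b * z) * w = b * x * z * w := by
      simpa only [mul_assoc] using hbL x (z * w)
    have haz : b * x * (a * z) * w = 0 := by
      simp only [mul_assoc, ha z w, mul_zero]
    rw [sub_mul, mul_sub, sub_mul, hbz, haz, sub_zero]
  by_contra! hlt
  refine hxy ?_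
  rw [← hbL x y]
  exact mul_mul_eq_zero_of_norm_lt_one hu (by rwa [norm_sub_rev]) b y

def leftAnnihilatorSqSubmodule (R A : Type*) [Semiring R] [NonUnitalNonAssocSemiring A]
    [Module R A] [IsScalarTower R A A] : Submodule R A where
  carrier := leftAnnihilatorSq A
  add_mem' {a b} ha hb x y := by rw [add_mul, add_mul, ha, hb, add_zero]
  zero_mem' x y := by rw [zero_mul, zero_mul]
  smul_mem' r a ha x y := by rw [smul_mul_assoc, smul_mul_assoc, ha, smul_zero]

theorem isPreconnected_leftAnnihilatorSq (A : Type*) [NonUnitalNormedRing A] [NormedSpace ℂ A]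
    [IsScalarTower ℂ A A] : IsPreconnected (leftAnnihilatorSq A) :=
  (((leftAnnihilatorSqSubmodule ℂ A).restrictScalars ℝ).isPathConnected).isConnected.isPreconnected

theorem not_isPreconnected_of_le_dist {X : Type*} [PseudoMetricSpace X] {s t u : Set X} {δ : ℝ}
    (hδ : 0 < δ) (hs : s ⊆ t ∪ u) (ht : (s ∩ t).Nonempty) (hu : (s ∩ u).Nonempty)
    (hdist : ∀ a ∈ t, ∀ b ∈ u, δ ≤ dist a b) : ¬IsPreconnected s := by
  intro hpre
  obtain ⟨z, hzs, hzt, hzu⟩ := hpre _ _ isOpen_thickening isOpen_thickening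
    (hs.trans (Set.union_subset_union (self_subset_thickening hδ t) (self_subset_thickening hδ u)))
    (ht.mono (Set.inter_subset_inter_right _ (self_subset_thickening hδ t)))
    (hu.mono (Set.inter_subset_inter_right _ (self_subset_thickening hδ u)))
  obtain ⟨a, ha, hza⟩ := mem_thickening_iff.mp hzt
  obtain ⟨b, hb, hzb⟩ := mem_thickening_iff.mp hzu
  rcases hs hzs with hz | hz
  · exact (hdist z hz b hb).not_gt hzb
  · exact (hdist a ha z hz).not_gt (dist_comm z a ▸ hza)

theorem stmt_11_general {A : Type*} [NonUnitalNormedRing A] [NormedSpace ℂ A]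
    [IsScalarTower ℂ A A]
    {L N Q : Set A}
    (hL : L = {a : A | ∀ x y : A, a * x * a * y = a * x * y})
    (hN : N = {a : A | ∀ x y : A, a * x * y = 0})
    (hQ : Q = L \ N) :
    (Q.Nonempty →
      (∀ a ∈ N, ∀ b ∈ Q, 1 ≤ ‖a - b‖) ∧
        1 ≤ sInf {d : ℝ | ∃ a ∈ N, ∃ b ∈ Q, d = ‖a - b‖}) ∧
    (¬ IsPreconnected L ↔ Q.Nonempty) := by
  change L = endomorphicLeft A at hL
  change N = leftAnnihilatorSq A at hN
  subst hL hN hQ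
  have hsep : ∀ a ∈ leftAnnihilatorSq A, ∀ b ∈ endomorphicLeft A \ leftAnnihilatorSq A,
      1 ≤ ‖a - b‖ := fun _ ha _ hb => one_le_norm_sub_of_mem_leftAnnihilatorSq ha hb
  have hNL := leftAnnihilatorSq_subset_endomorphicLeft A
  have h0N : (0 : A) ∈ leftAnnihilatorSq A := (leftAnnihilatorSqSubmodule ℂ A).zero_mem
  refine ⟨fun ⟨b, hb⟩ => ⟨hsep, le_csInf ⟨_, 0, h0N, b, hb, rfl⟩ ?_⟩, ⟨fun hdisc => ?_, ?_⟩⟩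
  · rintro d ⟨a, ha, b', hb', rfl⟩
    exact hsep a ha b' hb'
  · by_contra hQ
    rw [Set.not_nonempty_iff_eq_empty, Set.sdiff_eq_empty] at hQ
    exact hdisc (hQ.antisymm hNL ▸ isPreconnected_leftAnnihilatorSq A)
  · rintro ⟨b, hb⟩
    refine not_isPreconnected_of_le_dist one_pos
      (t := leftAnnihilatorSq A) (u := endomorphicLeft A \ leftAnnihilatorSq A)
      (fun z hz => (em (z ∈ leftAnnihilatorSq A)).imp id (⟨hz, ·⟩))
      ⟨0, hNL h0N, h0N⟩ ⟨b, hb.1, hb⟩ fun a ha b hb => ?_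
    rw [dist_eq_norm]
    exact hsep a ha b hb

/-- Let `A` be a complex (not necessarily unital) Banach algebra, `L(A)` its set of
endomorphic left elements, `N'₃(A) = {a | a*x*y = 0 ∀ x y}`, and
`Q(A) = L(A) \ N'₃(A)`. If `Q(A) ≠ ∅`, then `‖a − b‖ ≥ 1` for all `a ∈ N'₃(A)`,
`b ∈ Q(A)`, so `d(N'₃(A), Q(A)) ≥ 1`. Moreover `L(A)` is disconnected as a subspace
iff `Q(A) ≠ ∅`. -/
theorem stmt_11 {A : Type*} [NonUnitalNormedRing A] [NormedSpace ℂ A]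
    [IsScalarTower ℂ A A] [SMulCommClass ℂ A A] [CompleteSpace A]
    {L N Q : Set A}
    (hL : L = {a : A | ∀ x y : A, a * x * a * y = a * x * y})
    (hN : N = {a : A | ∀ x y : A, a * x * y = 0})
    (hQ : Q = L \ N) :
    (Q.Nonempty →
      (∀ a ∈ N, ∀ b ∈ Q, 1 ≤ ‖a - b‖) ∧
        1 ≤ sInf {d : ℝ | ∃ a ∈ N, ∃ b ∈ Q, d = ‖a - b‖}) ∧
    (¬ IsPreconnected L ↔ Q.Nonempty) :=
  stmt_11_general hL hN hQ
end

section
/- Let A be a complex Banach algebra (not necessarily unital). Then every connected component of the subspace L(A) is either a singleton or unbounded in norm. -/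
/-!
If the connected component of `a` in `L(A)` is bounded, then no line `c + ℂ • e` through a point
`c` of the component can lie in `L(A)` unless `e = 0`, since such a line is connected and
unbounded. Taking `e = c * u * c - c * u` and `e = c * u * c - u * c` shows that every point `c`
of a bounded component is central and satisfies `u * c * c = u * c`. For two such points `a, b`
the difference `d = b - a` then satisfies `v * d * d ^ 2 = v * d`, so `d` annihilates `A` as soon
as `‖d‖ < 1`; but then the line `a + ℂ • d` lies in `L(A)`, so `b = a`. A bounded component is
therefore discrete, and being connected it is a singleton.
-/

open Bornology Set Metric

section EndomorphicLeft

variable {A : Type*}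

section Algebra

variable [NonUnitalRing A] {a b c e : A}

def IsEndomorphicLeft (a : A) : Prop := ∀ x y : A, a * x * a * y = a * x * y

variable (A) in
def endomorphicLeftElements : Set A := {a | IsEndomorphicLeft a}

namespace IsEndomorphicLeft

theorem add_smul {R : Type*} [CommSemiring R] [Module R A] [IsScalarTower R A A]
    [SMulCommClass R A A] (hc : IsEndomorphicLeft c)
    (hce : ∀ x y : A, c * x * e * y = 0) (hec : ∀ x y : A, e * x * c * y = e * x * y)
    (hee : ∀ x y : A, e * x * e * y = 0) (s : R) : IsEndomorphicLeft (c + s • e) := by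
  intro x y
  simp only [add_mul, mul_add, smul_mul_assoc, mul_smul_comm]
  rw [hc, hce, hec, hee]
  simp

theorem add_smul_of_forall_mul_eq_zero {R : Type*} [CommSemiring R] [Module R A]
    [IsScalarTower R A A] [SMulCommClass R A A] (hc : IsEndomorphicLeft c)
    (he : ∀ y, e * y = 0) (s : R) : IsEndomorphicLeft (c + s • e) :=
  hc.add_smul (fun x y => by rw [mul_assoc _ e, he, mul_zero]) (fun x y => by simp [he])
    (fun x y => by simp [he]) s

theorem mul_mul_self_sub_mul_mul (hc : IsEndomorphicLeft c) (u y : A) :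
    (c * u * c - c * u) * y = 0 := by
  rw [sub_mul, hc, sub_self]

theorem add_smul_mul_mul_self_sub_mul_self {R : Type*} [CommSemiring R] [Module R A]
    [IsScalarTower R A A] [SMulCommClass R A A] (hc : IsEndomorphicLeft c) (u : A) (s : R) :
    IsEndomorphicLeft (c + s • (c * u * c - u * c)) := by
  have hec : ∀ x y : A, (c * u * c - u * c) * x * c * y = (c * u * c - u * c) * x * y := by
    intro x y
    calc (c * u * c - u * c) * x * c * y = c * (u * c * x) * c * y - u * (c * x * c * y) := by
          noncomm_ring
      _ = c * (u * c * x) * y - u * (c * x * y) := by rw [hc, hc]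
      _ = (c * u * c - u * c) * x * y := by noncomm_ring
  refine hc.add_smul (fun x y => ?_) hec (fun x y => ?_) s
  · calc c * x * (c * u * c - u * c) * y = c * x * c * (u * c * y) - c * x * (u * c * y) := by
          noncomm_ring
      _ = 0 := by rw [hc, sub_self]
  · calc (c * u * c - u * c) * x * (c * u * c - u * c) * y
          = (c * u * c - u * c) * x * c * (u * c * y)
            - (c * u * c - u * c) * x * (u * c * y) := by noncomm_ring
      _ = 0 := by rw [hec, sub_self]

end IsEndomorphicLeft

theorem mul_sub_mul_sub_mul_sub (hb : b ∈ center A)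
    (haa : ∀ u, u * a * a = u * a) (hbb : ∀ u, u * b * b = u * b) (v : A) :
    v * (b - a) * ((b - a) * (b - a)) = v * (b - a) := by
  have hab : ∀ w, w * a * b = w * b * a := fun w => by
    rw [mul_assoc, Semigroup.mem_center_iff.1 hb a, ← mul_assoc]
  simp only [mul_sub, sub_mul, ← mul_assoc, haa, hbb, hab]
  abel

end Algebra

theorem eq_zero_of_mul_eq_self_of_norm_lt_one [NonUnitalNormedRing A] {x z : A} (hz : ‖z‖ < 1)
    (h : x * z = x) : x = 0 := by
  have : ‖x‖ ≤ ‖x‖ * ‖z‖ := by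
    calc ‖x‖ = ‖x * z‖ := by rw [h]
      _ ≤ ‖x‖ * ‖z‖ := norm_mul_le x z
  exact norm_eq_zero.1 (by nlinarith [norm_nonneg x])

theorem sub_mul_eq_zero_of_norm_sub_lt_one [NonUnitalNormedRing A] {a b : A}
    (ha : a ∈ center A) (hb : b ∈ center A)
    (haa : ∀ u, u * a * a = u * a) (hbb : ∀ u, u * b * b = u * b) (hab : ‖b - a‖ < 1) (v : A) :
    (b - a) * v = 0 := by
  have hsq : ‖(b - a) * (b - a)‖ < 1 :=
    (norm_mul_le _ _).trans_lt (by nlinarith [norm_nonneg (b - a)])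
  rw [sub_mul, ← Semigroup.mem_center_iff.1 ha v, ← Semigroup.mem_center_iff.1 hb v, ← mul_sub]
  exact eq_zero_of_mul_eq_self_of_norm_lt_one hsq (mul_sub_mul_sub_mul_sub hb haa hbb v)

theorem eq_zero_of_isBounded_of_forall_add_smul_mem {𝕜 E : Type*} [RCLike 𝕜]
    [NormedAddCommGroup E] [NormedSpace 𝕜 E] {L : Set E} {c e : E}
    (hC : IsBounded (connectedComponentIn L c)) (hline : ∀ s : 𝕜, c + s • e ∈ L) : e = 0 := by
  have hsub : range (fun s : 𝕜 => c + s • e) ⊆ connectedComponentIn L c :=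
    (isPreconnected_range (by fun_prop)).subset_connectedComponentIn ⟨0, by simp⟩
      (range_subset_iff.2 hline)
  obtain ⟨M, hM⟩ := (hC.subset hsub).exists_norm_le
  by_contra he
  obtain ⟨s, hs⟩ := NormedField.exists_lt_norm 𝕜 ((M + ‖c‖) / ‖e‖)
  have hse : ‖s • e‖ ≤ M + ‖c‖ := by
    calc ‖s • e‖ = ‖(c + s • e) - c‖ := by rw [add_sub_cancel_left]
      _ ≤ ‖c + s • e‖ + ‖c‖ := norm_sub_le _ _
      _ ≤ M + ‖c‖ := by gcongr; exact hM _ ⟨s, rfl⟩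
  rw [div_lt_iff₀ (norm_pos_iff.2 he), ← norm_smul] at hs
  linarith

section Components

variable [NonUnitalNormedRing A] [NormedSpace ℂ A] [IsScalarTower ℂ A A] [SMulCommClass ℂ A A]

namespace IsEndomorphicLeft

variable {c : A} (hc : IsEndomorphicLeft c)
  (hC : IsBounded (connectedComponentIn (endomorphicLeftElements A) c))
include hc hC

theorem mul_mul_self_eq_mul_left_of_isBounded (u : A) : c * u * c = c * u :=
  sub_eq_zero.1 <| eq_zero_of_isBounded_of_forall_add_smul_mem (𝕜 := ℂ) hC
    (hc.add_smul_of_forall_mul_eq_zero (hc.mul_mul_self_sub_mul_mul u))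

theorem mul_mul_self_eq_mul_right_of_isBounded (u : A) : c * u * c = u * c :=
  sub_eq_zero.1 <| eq_zero_of_isBounded_of_forall_add_smul_mem (𝕜 := ℂ) hC
    (hc.add_smul_mul_mul_self_sub_mul_self u)

theorem mem_center_of_isBounded : c ∈ center A :=
  Semigroup.mem_center_iff.2 fun u => by
    rw [← hc.mul_mul_self_eq_mul_left_of_isBounded hC, hc.mul_mul_self_eq_mul_right_of_isBounded hC]

theorem mul_mul_self_of_isBounded (u : A) : u * c * c = u * c := by
  rw [Semigroup.mem_center_iff.1 (hc.mem_center_of_isBounded hC) u,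
    hc.mul_mul_self_eq_mul_left_of_isBounded hC]

theorem eq_of_mem_connectedComponentIn_of_norm_sub_lt_one {b : A}
    (hb : b ∈ connectedComponentIn (endomorphicLeftElements A) c) (hbc : ‖b - c‖ < 1) : b = c := by
  have hbL : IsEndomorphicLeft b := connectedComponentIn_subset _ _ hb
  have hCb : IsBounded (connectedComponentIn (endomorphicLeftElements A) b) :=
    connectedComponentIn_eq hb ▸ hC
  have hann := sub_mul_eq_zero_of_norm_sub_lt_one (hc.mem_center_of_isBounded hC)
    (hbL.mem_center_of_isBounded hCb) (hc.mul_mul_self_of_isBounded hC)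
    (hbL.mul_mul_self_of_isBounded hCb) hbc
  exact sub_eq_zero.1 <| eq_zero_of_isBounded_of_forall_add_smul_mem
    (𝕜 := ℂ) hC (hc.add_smul_of_forall_mul_eq_zero hann)

end IsEndomorphicLeft

theorem isDiscrete_connectedComponentIn_of_isBounded {a : A}
    (hC : IsBounded (connectedComponentIn (endomorphicLeftElements A) a)) :
    IsDiscrete (connectedComponentIn (endomorphicLeftElements A) a) := by
  refine isDiscrete_iff_forall_mem_exists_isOpen.2 fun b hb => ⟨ball b 1, isOpen_ball, ?_⟩
  have hbL : IsEndomorphicLeft b := connectedComponentIn_subset _ _ hb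
  rw [connectedComponentIn_eq hb] at hC ⊢
  refine subset_antisymm (fun x ⟨hx, hxC⟩ => ?_) (singleton_subset_iff.2
    ⟨mem_ball_self one_pos, mem_connectedComponentIn hbL⟩)
  exact hbL.eq_of_mem_connectedComponentIn_of_norm_sub_lt_one hC hxC (mem_ball_iff_norm.1 hx)

end Components

end EndomorphicLeft

theorem stmt_14_general {A : Type*} [NonUnitalNormedRing A] [NormedSpace ℂ A]
    [IsScalarTower ℂ A A] [SMulCommClass ℂ A A]
    {L : Set A}
    (hL : L = {a : A | ∀ x y : A, a * x * a * y = a * x * y}) :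
    ∀ a ∈ L, connectedComponentIn L a = {a} ∨
      ∀ r : ℝ, ∃ b ∈ connectedComponentIn L a, r < ‖b‖ := by
  subst hL
  intro a ha
  refine or_iff_not_imp_right.2 fun hunbdd => ?_
  have hC : IsBounded (connectedComponentIn (endomorphicLeftElements A) a) := by
    push Not at hunbdd
    exact isBounded_iff_forall_norm_le.2 hunbdd
  exact (isPreconnected_connectedComponentIn.isDiscrete_iff_subsingleton.1
    (isDiscrete_connectedComponentIn_of_isBounded hC)).eq_singleton_of_mem
    (mem_connectedComponentIn ha)

/-- In a complex (not necessarily unital) Banach algebra `A`, every connected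
component of the subspace `L(A)` is either a singleton or unbounded in norm. -/
theorem stmt_14 {A : Type*} [NonUnitalNormedRing A] [NormedSpace ℂ A]
    [IsScalarTower ℂ A A] [SMulCommClass ℂ A A] [CompleteSpace A]
    {L : Set A}
    (hL : L = {a : A | ∀ x y : A, a * x * a * y = a * x * y}) :
    ∀ a ∈ L, connectedComponentIn L a = {a} ∨
      ∀ r : ℝ, ∃ b ∈ connectedComponentIn L a, r < ‖b‖ :=
  stmt_14_general hL
end
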